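/- Let 0 < k² < 1/3, a = 2(1−k²), b = 4k², and define the Fourier symbol M̂(ξ,η) = (ξ²+η²)/(ξ²+η² − (b/a)ξ²) − bξ²/((ξ²+η²+a)(ξ²+η² − (b/a)ξ²)) for (ξ,η) ≠ (0,0), with M̂(0,0) = a/(a) appropriately defined by the limit. Then sup_{(ξ,η)∈ℝ²} (|M̂(ξ,η)| + |M̂(ξ,η)^{-1}|) < ∞. -/

import Mathlib

/-- The Fourier symbol `M̂` of the multiplier `𝓜`, with `a = 2(1-k²)`, `b = 4k²`,
defined at the origin by its limit value `1`. -/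
noncomputable def Mhat (k ξ η : ℝ) : ℝ :=
  if (ξ, η) = (0, 0) then 1 else
    (ξ ^ 2 + η ^ 2) / (ξ ^ 2 + η ^ 2 - (4 * k ^ 2 / (2 * (1 - k ^ 2))) * ξ ^ 2) -
      (4 * k ^ 2) * ξ ^ 2 /
        ((ξ ^ 2 + η ^ 2 + 2 * (1 - k ^ 2)) *
          (ξ ^ 2 + η ^ 2 - (4 * k ^ 2 / (2 * (1 - k ^ 2))) * ξ ^ 2))

/-!
Write `r = ξ² + η²`, `x = ξ²` and `c = b / a`, so that `b = a c` and `0 ≤ x ≤ r`. Then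
`M̂ = r / (r - c x) - a c x / ((r + a)(r - c x)) = 1 + c x r / ((r + a)(r - c x))`.
The second form gives `1 ≤ M̂` as soon as `r - c x > 0`, and dropping the subtracted term in
the first gives `M̂ ≤ r / (r - c x) ≤ 1 / (1 - c)`. Here
`c = 2k² / (1 - k²) < 1` is equivalent to `k² < 1/3`.
-/

open Set

noncomputable def multiplierSymbol (a c x r : ℝ) : ℝ :=
  r / (r - c * x) - a * c * x / ((r + a) * (r - c * x))

section multiplierSymbol

variable {a c x r : ℝ}

theorem multiplierSymbol_eq_one_add (hra : r + a ≠ 0) (hcx : r - c * x ≠ 0) :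
    multiplierSymbol a c x r = 1 + c * x * r / ((r + a) * (r - c * x)) := by
  unfold multiplierSymbol
  field_simp
  ring

theorem one_le_multiplierSymbol (ha : 0 ≤ a) (hc : 0 ≤ c) (hx : 0 ≤ x) (hcx : c * x < r) :
    1 ≤ multiplierSymbol a c x r := by
  have hr : 0 < r := (mul_nonneg hc hx).trans_lt hcx
  have hcx' : 0 < r - c * x := sub_pos.2 hcx
  rw [multiplierSymbol_eq_one_add (by positivity) hcx'.ne']
  exact le_add_of_nonneg_right (by positivity)

theorem multiplierSymbol_le_inv_one_sub (ha : 0 ≤ a) (hc0 : 0 ≤ c) (hc1 : c < 1)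
    (hx : 0 ≤ x) (hxr : x ≤ r) (hr : 0 < r) :
    multiplierSymbol a c x r ≤ (1 - c)⁻¹ := by
  have hc1' : 0 < 1 - c := sub_pos.2 hc1
  have hcx : (1 - c) * r ≤ r - c * x := by nlinarith
  have hcx' : 0 < r - c * x := (mul_pos hc1' hr).trans_le hcx
  calc multiplierSymbol a c x r ≤ r / (r - c * x) :=
        sub_le_self _ (div_nonneg (by positivity) (mul_nonneg (by positivity) hcx'.le))
    _ ≤ r / ((1 - c) * r) := div_le_div_of_nonneg_left hr.le (by positivity) hcx
    _ = (1 - c)⁻¹ := by field_simp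

theorem multiplierSymbol_mem_Icc (ha : 0 ≤ a) (hc0 : 0 ≤ c) (hc1 : c < 1)
    (hx : 0 ≤ x) (hxr : x ≤ r) (hr : 0 < r) :
    multiplierSymbol a c x r ∈ Icc 1 (1 - c)⁻¹ :=
  ⟨one_le_multiplierSymbol ha hc0 hx (by nlinarith),
    multiplierSymbol_le_inv_one_sub ha hc0 hc1 hx hxr hr⟩

end multiplierSymbol

theorem abs_add_abs_inv_le_of_mem_Icc {m B : ℝ} (hm : m ∈ Icc 1 B) : |m| + |m⁻¹| ≤ B + 1 := by
  have hm0 : 0 < m := one_pos.trans_le hm.1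
  rw [abs_of_pos hm0, abs_of_pos (inv_pos.2 hm0)]
  exact add_le_add hm.2 (inv_le_one_of_one_le₀ hm.1)

theorem Mhat_eq_multiplierSymbol {k ξ η : ℝ} (hk : k ^ 2 < 1) (hξη : (ξ, η) ≠ (0, 0)) :
    Mhat k ξ η = multiplierSymbol (2 * (1 - k ^ 2)) (4 * k ^ 2 / (2 * (1 - k ^ 2)))
      (ξ ^ 2) (ξ ^ 2 + η ^ 2) := by
  have ha : 2 * (1 - k ^ 2) ≠ 0 := by nlinarith
  rw [Mhat, if_neg hξη, multiplierSymbol, mul_div_cancel₀ _ ha]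

theorem Mhat_mem_Icc {k : ℝ} (hk : k ^ 2 < 1 / 3) (ξ η : ℝ) :
    Mhat k ξ η ∈ Icc 1 (1 - 4 * k ^ 2 / (2 * (1 - k ^ 2)))⁻¹ := by
  have ha : 0 < 2 * (1 - k ^ 2) := by nlinarith
  have hc0 : 0 ≤ 4 * k ^ 2 / (2 * (1 - k ^ 2)) := by positivity
  have hc1 : 4 * k ^ 2 / (2 * (1 - k ^ 2)) < 1 := (div_lt_one ha).2 (by linarith)
  by_cases hξη : (ξ, η) = (0, 0)
  · rw [Mhat, if_pos hξη]
    exact ⟨le_rfl, one_le_inv₀ (by linarith) |>.2 (by linarith)⟩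
  · have hr : 0 < ξ ^ 2 + η ^ 2 := by
      simp only [Prod.mk.injEq, not_and_or] at hξη
      rcases hξη with h | h <;> positivity
    rw [Mhat_eq_multiplierSymbol (by linarith) hξη]
    exact multiplierSymbol_mem_Icc ha.le hc0 hc1 (sq_nonneg ξ)
      (le_add_of_nonneg_right (sq_nonneg η)) hr

theorem Mhat_bounded_general (k : ℝ) (hk : k ^ 2 < 1 / 3) :
    ∃ C : ℝ, ∀ ξ η : ℝ, |Mhat k ξ η| + |(Mhat k ξ η)⁻¹| ≤ C :=
  ⟨_, fun ξ η => abs_add_abs_inv_le_of_mem_Icc (Mhat_mem_Icc hk ξ η)⟩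

/-- For `0 < k² < 1/3`, `sup_{(ξ,η)∈ℝ²} (|M̂(ξ,η)| + |M̂(ξ,η)⁻¹|) < ∞`. -/
theorem Mhat_bounded (k : ℝ) (hk0 : 0 < k ^ 2) (hk : k ^ 2 < 1 / 3) :
    ∃ C : ℝ, ∀ ξ η : ℝ, |Mhat k ξ η| + |(Mhat k ξ η)⁻¹| ≤ C :=
  Mhat_bounded_general k hk
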